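/- arXiv:1711.11447 — 2 statements merged into one kernel-verified Lean document; each statement's English description precedes it below -/
import Mathlib

section
/- Let A be a skew PBW extension of R with generators x_1,…,x_n. For each 1 ≤ i ≤ n, there exists an injective ring endomorphism σ_i : R → R and a σ_i-derivation δ_i : R → R such that x_i r = σ_i(r) x_i + δ_i(r) for all r ∈ R. -/
/-!
Since `x_i` and `1` are distinct standard monomials, they are left linearly independent over `R`,
so the expression `x_i r = σ(r) x_i + δ(r)`, which exists by the commutation rule of the
extension, is unique. Expanding `x_i (r + s)` and `x_i (r s)` in two ways and comparing
coefficients shows that `σ` is a ring endomorphism and `δ` a `σ`-derivation; for `r ≠ 0`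
uniqueness also gives `σ(r) = c_{i,r} ≠ 0`, hence injectivity.
-/

/-- A skew PBW extension `A = σ(R)⟨x_1,…,x_n⟩` of a ring `R`:  `R` embeds in
`A` via `f`, `A` is a free left `R`-module with basis the standard monomials
`x^α = x_1^{α_1}⋯x_n^{α_n}`, for each `i` and nonzero `r ∈ R` there is a
nonzero `c_{i,r}` with `x_i r − c_{i,r} x_i ∈ R`, and for each `i, j` there
is a nonzero `c_{i,j}` with `x_j x_i − c_{i,j} x_i x_j ∈ R + Rx_1 + ⋯ + Rx_n`. -/
structure SkewPBWExt (R A : Type*) [Ring R] [Ring A] (n : ℕ) where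
  f : R →+* A
  hf : Function.Injective f
  x : Fin n → A
  basis : @Module.Basis (Fin n → ℕ) R A _ _ (Module.compHom A f)
  hbasis : ∀ α : Fin n → ℕ, basis α = (List.ofFn fun i => x i ^ α i).prod
  c : Fin n → R → R
  hc : ∀ i r, r ≠ 0 → c i r ≠ 0 ∧ ∃ r0 : R, x i * f r - f (c i r) * x i = f r0
  cc : Fin n → Fin n → R
  hcc0 : ∀ i j, cc i j ≠ 0
  hcc : ∀ i j, ∃ (r0 : R) (s : Fin n → R),
    x j * x i - f (cc i j) * (x i * x j) = f r0 + ∑ k, f (s k) * x k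

theorem List.prod_ofFn_eq_of_forall_ne {M : Type*} [Monoid M] :
    ∀ {n : ℕ} (g : Fin n → M) (i : Fin n), (∀ j, j ≠ i → g j = 1) →
      (List.ofFn g).prod = g i
  | 0, _, i, _ => i.elim0
  | n + 1, g, i, h => by
    rw [List.ofFn_succ, List.prod_cons]
    cases i using Fin.cases with
    | zero =>
      rw [List.prod_eq_one (by simpa using fun j => h j.succ (Fin.succ_ne_zero j)), mul_one]
    | succ i =>
      rw [h 0 (Fin.succ_ne_zero i).symm, one_mul,
        List.prod_ofFn_eq_of_forall_ne _ i fun j hj => h j.succ (by simpa using hj)]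

section SkewCommutation

variable {R A : Type*} [Ring R] [Ring A] {f : R →+* A} {X : A}

theorem eq_and_eq_of_mul_add_eq (hind : ∀ a b : R, f a * X + f b = 0 → a = 0 ∧ b = 0)
    {a b a' b' : R} (h : f a * X + f b = f a' * X + f b') : a = a' ∧ b = b' := by
  rw [← sub_eq_zero (a := a), ← sub_eq_zero (a := b)]
  refine hind _ _ ?_
  rw [map_sub, map_sub, sub_mul, ← sub_eq_zero.2 h]
  abel

theorem skewCommutation_map_one (hind : ∀ a b : R, f a * X + f b = 0 → a = 0 ∧ b = 0)
    {σ δ : R → R} (hspec : ∀ r, X * f r = f (σ r) * X + f (δ r)) : σ 1 = 1 :=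
  (eq_and_eq_of_mul_add_eq hind ((hspec 1).symm.trans (by simp : X * f 1 = f 1 * X + f 0))).1

theorem skewCommutation_map_add (hind : ∀ a b : R, f a * X + f b = 0 → a = 0 ∧ b = 0)
    {σ δ : R → R} (hspec : ∀ r, X * f r = f (σ r) * X + f (δ r)) (a b : R) :
    σ (a + b) = σ a + σ b ∧ δ (a + b) = δ a + δ b := by
  refine eq_and_eq_of_mul_add_eq hind ((hspec _).symm.trans ?_)
  rw [map_add, mul_add, hspec a, hspec b, map_add, map_add]
  noncomm_ring

theorem skewCommutation_map_mul (hind : ∀ a b : R, f a * X + f b = 0 → a = 0 ∧ b = 0)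
    {σ δ : R → R} (hspec : ∀ r, X * f r = f (σ r) * X + f (δ r)) (a b : R) :
    σ (a * b) = σ a * σ b ∧ δ (a * b) = σ a * δ b + δ a * b := by
  refine eq_and_eq_of_mul_add_eq hind ((hspec _).symm.trans ?_)
  rw [map_mul, ← mul_assoc, hspec a, add_mul, mul_assoc, hspec b]
  simp only [map_add, map_mul]
  noncomm_ring

theorem exists_ringHom_skewDerivation_of_mul_eq
    (hind : ∀ a b : R, f a * X + f b = 0 → a = 0 ∧ b = 0)
    (hcomm : ∀ r, ∃ a b : R, X * f r = f a * X + f b) :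
    ∃ (σ : R →+* R) (δ : R → R),
      (∀ a b : R, δ (a + b) = δ a + δ b) ∧
      (∀ a b : R, δ (a * b) = σ a * δ b + δ a * b) ∧
      ∀ r : R, X * f r = f (σ r) * X + f (δ r) := by
  choose σ δ hspec using hcomm
  exact ⟨RingHom.mk' ⟨⟨σ, skewCommutation_map_one hind hspec⟩,
      fun a b => (skewCommutation_map_mul hind hspec a b).1⟩
      fun a b => (skewCommutation_map_add hind hspec a b).1,
    δ, fun a b => (skewCommutation_map_add hind hspec a b).2,
    fun a b => (skewCommutation_map_mul hind hspec a b).2, hspec⟩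

theorem skewCommutation_injective (hind : ∀ a b : R, f a * X + f b = 0 → a = 0 ∧ b = 0)
    {σ : R →+* R} {δ : R → R} (hspec : ∀ r, X * f r = f (σ r) * X + f (δ r))
    (hc : ∀ r, r ≠ 0 → ∃ c ≠ 0, ∃ r₀, X * f r - f c * X = f r₀) :
    Function.Injective σ := by
  refine (injective_iff_map_eq_zero σ).2 fun r hr => by_contra fun hr0 => ?_
  obtain ⟨c, hc0, r₀, h⟩ := hc r hr0
  rw [sub_eq_iff_eq_add', hspec] at h
  exact hc0 ((eq_and_eq_of_mul_add_eq hind h).1 ▸ hr)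

end SkewCommutation

namespace SkewPBWExt

variable {R A : Type*} [Ring R] [Ring A] {n : ℕ} (E : SkewPBWExt R A n)

theorem basis_zero : E.basis 0 = 1 := by
  simp [E.hbasis]

theorem basis_single (i : Fin n) : E.basis (Pi.single i 1) = E.x i := by
  rw [E.hbasis, List.prod_ofFn_eq_of_forall_ne _ i fun j hj => by
    rw [Pi.single_eq_of_ne hj, pow_zero], Pi.single_eq_same, pow_one]

theorem eq_zero_of_mul_x_add_eq_zero (i : Fin n) (a b : R)
    (h : E.f a * E.x i + E.f b = 0) : a = 0 ∧ b = 0 := by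
  let : Module R A := Module.compHom A E.f
  have hne : (Pi.single i 1 : Fin n → ℕ) ≠ 0 := fun h0 => by simpa using congrFun h0 i
  have hli : LinearIndependent R ![E.basis (Pi.single i 1), E.basis 0] := by
    convert E.basis.linearIndependent.comp _ (injective_pair_iff_ne.2 hne) using 1
    ext j
    fin_cases j <;> rfl
  refine LinearIndependent.pair_iff.1 hli a b ?_
  rw [E.basis_single, E.basis_zero]
  change E.f a * E.x i + E.f b * 1 = 0
  rwa [mul_one]

theorem exists_mul_f_eq (i : Fin n) (r : R) :
    ∃ a b : R, E.x i * E.f r = E.f a * E.x i + E.f b := by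
  rcases eq_or_ne r 0 with rfl | hr
  · exact ⟨0, 0, by simp⟩
  · obtain ⟨-, r₀, h⟩ := E.hc i r hr
    exact ⟨E.c i r, r₀, sub_eq_iff_eq_add'.1 h⟩

end SkewPBWExt

/-- For each `i`, there exist an injective ring endomorphism `σ_i` of `R` and
a `σ_i`-derivation `δ_i` such that `x_i r = σ_i(r) x_i + δ_i(r)` in `A`. -/
theorem skewPBW_sigma_delta_exists (R A : Type*) [Ring R] [Ring A] (n : ℕ)
    (E : SkewPBWExt R A n) (i : Fin n) :
    ∃ (σ : R →+* R) (δ : R → R),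
      Function.Injective σ ∧
      (∀ a b : R, δ (a + b) = δ a + δ b) ∧
      (∀ a b : R, δ (a * b) = σ a * δ b + δ a * b) ∧
      ∀ r : R, E.x i * E.f r = E.f (σ r) * E.x i + E.f (δ r) := by
  have hind := E.eq_zero_of_mul_x_add_eq_zero i
  obtain ⟨σ, δ, hadd, hmul, hspec⟩ :=
    exists_ringHom_skewDerivation_of_mul_eq hind (E.exists_mul_f_eq i)
  exact ⟨σ, δ, skewCommutation_injective hind hspec fun r hr => ⟨E.c i r, E.hc i r hr⟩,
    hadd, hmul, hspec⟩
end

section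
/- Let K be a field of characteristic ≠ 2 and A = K⟨x, y⟩/(yx − xy − x²) the Jordan plane. Then the assignments ν(x) = x, ν(y) = 2x + y extend to a K-algebra automorphism ν of A, and ν is not an inner automorphism of A. -/
/-- The defining relation of the Jordan plane: `yx = xy + x²`, with
`x = ι 0`, `y = ι 1` in the free algebra on two generators. -/
def jordanRel (K : Type*) [Field K] :
    FreeAlgebra K (Fin 2) → FreeAlgebra K (Fin 2) → Prop := fun u v =>
  u = FreeAlgebra.ι K 1 * FreeAlgebra.ι K 0 ∧
  v = FreeAlgebra.ι K 0 * FreeAlgebra.ι K 1 + FreeAlgebra.ι K 0 * FreeAlgebra.ι K 0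

section Aux

variable (K : Type*) [Field K]

noncomputable def jX : RingQuot (jordanRel K) :=
  RingQuot.mkAlgHom K (jordanRel K) (FreeAlgebra.ι K 0)

noncomputable def jY : RingQuot (jordanRel K) :=
  RingQuot.mkAlgHom K (jordanRel K) (FreeAlgebra.ι K 1)

theorem jordan_rel_quot : jY K * jX K = jX K * jY K + jX K * jX K := by
  have h := RingQuot.mkAlgHom_rel K (s := jordanRel K)
    (x := FreeAlgebra.ι K 1 * FreeAlgebra.ι K 0)
    (y := FreeAlgebra.ι K 0 * FreeAlgebra.ι K 1 + FreeAlgebra.ι K 0 * FreeAlgebra.ι K 0)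
    ⟨rfl, rfl⟩
  simpa [jX, jY, map_mul, map_add] using h

/-- The free-algebra hom sending `x ↦ x`, `y ↦ c•x + y` (into the quotient). -/
noncomputable def nuF (c : K) : FreeAlgebra K (Fin 2) →ₐ[K] RingQuot (jordanRel K) :=
  FreeAlgebra.lift K ![jX K, c • jX K + jY K]

theorem nuF_rel (c : K) : ∀ ⦃u v⦄, jordanRel K u v → nuF K c u = nuF K c v := by
  rintro u v ⟨hu, hv⟩
  subst hu; subst hv
  simp only [nuF, map_mul, map_add, FreeAlgebra.lift_ι_apply]
  simp only [Matrix.cons_val_zero, Matrix.cons_val_one, Matrix.head_cons]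
  rw [add_mul, mul_add, smul_mul_assoc, mul_smul_comm, jordan_rel_quot, add_assoc]

noncomputable def nu (c : K) : RingQuot (jordanRel K) →ₐ[K] RingQuot (jordanRel K) :=
  RingQuot.liftAlgHom K ⟨nuF K c, nuF_rel K c⟩

theorem nu_jX (c : K) : nu K c (jX K) = jX K := by
  simp [nu, jX, RingQuot.liftAlgHom_mkAlgHom_apply, nuF, FreeAlgebra.lift_ι_apply]

theorem nu_jY (c : K) : nu K c (jY K) = c • jX K + jY K := by
  simp [nu, jY, RingQuot.liftAlgHom_mkAlgHom_apply, nuF, FreeAlgebra.lift_ι_apply]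

theorem nu_comp (c : K) : (nu K c).comp (nu K (-c)) = AlgHom.id K _ := by
  apply RingQuot.ringQuot_ext'
  apply FreeAlgebra.hom_ext
  funext i
  show nu K c (nu K (-c) (RingQuot.mkAlgHom K (jordanRel K) (FreeAlgebra.ι K i))) =
    RingQuot.mkAlgHom K (jordanRel K) (FreeAlgebra.ι K i)
  fin_cases i
  · show nu K c (nu K (-c) (jX K)) = jX K
    rw [nu_jX, nu_jX]
  · show nu K c (nu K (-c) (jY K)) = jY K
    rw [nu_jY, map_add, map_smul, nu_jX, nu_jY]
    module

end Aux

/-- In the Jordan plane `A = K⟨x,y⟩/(yx − xy − x²)` over a field of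
characteristic `≠ 2`, the assignments `ν(x) = x`, `ν(y) = 2x + y` extend to
a `K`-algebra automorphism `ν` of `A`, and `ν` is not inner. -/
theorem jordan_plane_nakayama (K : Type*) [Field K] (h2 : (2 : K) ≠ 0) :
    ∃ ν : RingQuot (jordanRel K) ≃ₐ[K] RingQuot (jordanRel K),
      ν (RingQuot.mkAlgHom K (jordanRel K) (FreeAlgebra.ι K 0)) =
        RingQuot.mkAlgHom K (jordanRel K) (FreeAlgebra.ι K 0) ∧
      ν (RingQuot.mkAlgHom K (jordanRel K) (FreeAlgebra.ι K 1)) =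
        (2 : K) • RingQuot.mkAlgHom K (jordanRel K) (FreeAlgebra.ι K 0) +
          RingQuot.mkAlgHom K (jordanRel K) (FreeAlgebra.ι K 1) ∧
      ¬ ∃ u : (RingQuot (jordanRel K))ˣ,
          ∀ a : RingQuot (jordanRel K), ν a = (u : RingQuot (jordanRel K)) * a * (↑u⁻¹ : RingQuot (jordanRel K)) := by
  refine ⟨AlgEquiv.ofAlgHom (nu K 2) (nu K (-2)) (by simpa using nu_comp K 2)
      (by simpa using nu_comp K (-2)), nu_jX K 2, nu_jY K 2, ?_⟩
  rintro ⟨u, hu⟩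
  -- the representation `x ↦ ε`, `y ↦ 0` into the dual numbers
  have psiF_rel : ∀ ⦃a b⦄, jordanRel K a b →
      (FreeAlgebra.lift K ![DualNumber.eps, 0] : FreeAlgebra K (Fin 2) →ₐ[K] DualNumber K) a =
      FreeAlgebra.lift K ![DualNumber.eps, 0] b := by
    rintro a b ⟨ha, hb⟩
    subst ha; subst hb
    simp [FreeAlgebra.lift_ι_apply, DualNumber.eps_mul_eps]
  set psi : RingQuot (jordanRel K) →ₐ[K] DualNumber K :=
    RingQuot.liftAlgHom K ⟨FreeAlgebra.lift K ![DualNumber.eps, 0], psiF_rel⟩ with hpsi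
  have hx : psi (jX K) = DualNumber.eps := by
    simp [hpsi, jX, RingQuot.liftAlgHom_mkAlgHom_apply, FreeAlgebra.lift_ι_apply]
  have hy : psi (jY K) = 0 := by
    simp [hpsi, jY, RingQuot.liftAlgHom_mkAlgHom_apply, FreeAlgebra.lift_ι_apply]
  have h := hu (jY K)
  have h' : psi (nu K 2 (jY K)) = psi ((u : RingQuot (jordanRel K)) * jY K * ↑u⁻¹) :=
    congrArg psi h
  rw [nu_jY, map_add, map_smul, hx, hy, map_mul, map_mul, hy, mul_zero, zero_mul] at h'
  have : (2 : K) • (DualNumber.eps : DualNumber K) = 0 := by simpa using h'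
  have hsnd := congrArg TrivSqZeroExt.snd this
  simp at hsnd
  exact h2 hsnd
end
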